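/- arXiv:2308.09797 — 12 statements merged into one kernel-verified Lean document; each statement's English description precedes it below -/
import Mathlib

section
/- For every z : S → ℝ≥0 with ∑_{e∈S} z(e) > q, there exists a unique real number r ≥ 0 such that ∑_{e∈S} min(r, z(e)) = q (the cutting height of z). -/
open scoped NNReal

/-! `r ↦ ∑ e, min r (z e)` is continuous, vanishes at `0` and equals `∑ e, z e` from `r = ∑ e, z e` on,
so the intermediate value theorem gives a cutting height. It is strictly increasing while it stays
below `∑ e, z e`: then some `z e` exceeds `r`, and that summand grows with `r`. -/

namespace NNReal

variable {S : Type*} [Fintype S]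

def truncSum (z : S → ℝ≥0) (r : ℝ≥0) : ℝ≥0 := ∑ e, min r (z e)

theorem continuous_truncSum (z : S → ℝ≥0) : Continuous (truncSum z) :=
  continuous_finsetSum _ fun _ _ => continuous_id.min continuous_const

@[simp]
theorem truncSum_zero (z : S → ℝ≥0) : truncSum z 0 = 0 := by
  simp [truncSum]

theorem truncSum_of_forall_le {z : S → ℝ≥0} {r : ℝ≥0} (hr : ∀ e, z e ≤ r) :
    truncSum z r = ∑ e, z e :=
  Finset.sum_congr rfl fun e _ => min_eq_right (hr e)

theorem truncSum_sum (z : S → ℝ≥0) : truncSum z (∑ e, z e) = ∑ e, z e :=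
  truncSum_of_forall_le fun e => Finset.single_le_sum (fun _ _ => zero_le) (Finset.mem_univ e)

theorem truncSum_lt_truncSum {z : S → ℝ≥0} {r₁ r₂ : ℝ≥0} (hr : r₁ < r₂)
    (hlt : truncSum z r₁ < ∑ e, z e) : truncSum z r₁ < truncSum z r₂ := by
  obtain ⟨e, he⟩ : ∃ e, r₁ < z e := by
    by_contra! hle
    exact hlt.ne (truncSum_of_forall_le hle)
  refine Finset.sum_lt_sum (fun i _ => min_le_min_right _ hr.le) ⟨e, Finset.mem_univ e, ?_⟩
  rw [min_eq_left he.le]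
  exact lt_min hr he

theorem eq_of_truncSum_eq {z : S → ℝ≥0} {r₁ r₂ : ℝ≥0} (h : truncSum z r₁ = truncSum z r₂)
    (hlt : truncSum z r₁ < ∑ e, z e) : r₁ = r₂ := by
  rcases lt_trichotomy r₁ r₂ with h₁₂ | rfl | h₂₁
  · exact absurd h (truncSum_lt_truncSum h₁₂ hlt).ne
  · rfl
  · exact absurd h.symm (truncSum_lt_truncSum h₂₁ (h ▸ hlt)).ne

end NNReal

/-- For every `z : S → ℝ≥0` with `∑ e, z e > q`, there exists a unique
`r ≥ 0` (in `ℝ≥0`) such that `∑ e, min r (z e) = q` (the cutting height of `z`). -/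
theorem cutting_height_exists_unique {S : Type*} [Fintype S] (q : ℝ≥0) (z : S → ℝ≥0)
    (h : q < ∑ e, z e) :
    ∃! r : ℝ≥0, (∑ e, min r (z e)) = q := by
  have hq : q ∈ Set.Icc (NNReal.truncSum z 0) (NNReal.truncSum z (∑ e, z e)) := by
    rw [NNReal.truncSum_zero, NNReal.truncSum_sum]
    exact ⟨zero_le, h.le⟩
  obtain ⟨r, -, hr⟩ :=
    intermediate_value_Icc zero_le (NNReal.continuous_truncSum z).continuousOn hq
  refine ⟨r, hr, fun r' hr' => NNReal.eq_of_truncSum_eq (hr'.trans hr.symm) ?_⟩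
  exact (show NNReal.truncSum z r' = q from hr') ▸ h
end

section
/- The diversifying choice function is consistent: for all z, z' : S → ℝ≥0, if C(z) ≤ z' ≤ z pointwise, then C(z') = C(z). -/
/-!
Truncations `fun e => min r (z e)` are monotone in `r`, so a truncation is determined by its
total; hence `C(z')` is the truncation of `z'` at any height `r` whose truncation of `z'` has
total `q`. If `C(z) = min r ∘ z ≤ z' ≤ z`, then `z'` differs from `z` only above the cut, so
`min r ∘ z' = min r ∘ z`, whose total is `q`.
-/

open scoped NNReal

/-- `IsDivChoice q z w` asserts that `w = C(z)`, where `C` is the diversifying choice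
function with quota `q` on coordinates indexed by the finite set `S`:
if `|z| = ∑ e, z e ≤ q` then `C(z) = z`, and otherwise `C(z) e = min r (z e)` for all `e`,
where `r ≥ 0` is the (unique) cutting height satisfying `∑ e, min r (z e) = q`. -/
def IsDivChoice {S : Type*} [Fintype S] (q : ℝ≥0) (z w : S → ℝ≥0) : Prop :=
  ((∑ e, z e) ≤ q ∧ w = z) ∨
    (q < ∑ e, z e ∧ ∃ r : ℝ≥0, (∑ e, min r (z e)) = q ∧ w = fun e => min r (z e))

theorem min_eq_min_of_min_le_of_le {α : Type*} [LinearOrder α] {r a b : α}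
    (hab : min r a ≤ b) (hba : b ≤ a) : min r b = min r a := by
  rcases le_total a r with har | hra
  · rw [min_eq_right har] at hab ⊢
    rw [le_antisymm hba hab, min_eq_right har]
  · rw [min_eq_left hra] at hab ⊢
    exact min_eq_left hab

theorem Fintype.eq_of_le_of_sum_le {S M : Type*} [Fintype S]
    [AddCommMonoid M] [PartialOrder M] [IsOrderedCancelAddMonoid M] {f g : S → M}
    (hfg : f ≤ g) (hsum : ∑ e, g e ≤ ∑ e, f e) : f = g :=
  hfg.eq_of_not_lt fun hlt => (Fintype.sum_strictMono hlt).not_ge hsum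

theorem truncate_eq_truncate_of_sum_eq {S : Type*} [Fintype S] {z : S → ℝ≥0} {r r' : ℝ≥0}
    (hsum : ∑ e, min r (z e) = ∑ e, min r' (z e)) :
    (fun e => min r (z e)) = fun e => min r' (z e) := by
  rcases le_total r r' with hr | hr
  · exact Fintype.eq_of_le_of_sum_le (fun e => min_le_min_right _ hr) hsum.ge
  · exact (Fintype.eq_of_le_of_sum_le (fun e => min_le_min_right _ hr) hsum.le).symm

namespace IsDivChoice

variable {S : Type*} [Fintype S] {q : ℝ≥0} {z w : S → ℝ≥0}

theorem eq_self_of_sum_le (h : IsDivChoice q z w) (hz : ∑ e, z e ≤ q) : w = z := by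
  rcases h with ⟨-, hw⟩ | ⟨hlt, -⟩
  · exact hw
  · exact absurd hz (not_le.mpr hlt)

theorem eq_truncate_of_sum_truncate_eq (h : IsDivChoice q z w) {r : ℝ≥0}
    (hr : ∑ e, min r (z e) = q) : w = fun e => min r (z e) := by
  rcases h with ⟨hz, hw⟩ | ⟨-, r', hr', hw⟩
  · subst w
    exact (Fintype.eq_of_le_of_sum_le (fun e => min_le_right r (z e)) (hr ▸ hz)).symm
  · subst w
    exact truncate_eq_truncate_of_sum_eq (hr'.trans hr.symm)

end IsDivChoice

/-- The diversifying choice function is consistent: if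
`C(z) ≤ z' ≤ z` pointwise, then `C(z') = C(z)`. -/
theorem divChoice_consistent {S : Type*} [Fintype S] (q : ℝ≥0) (z z' cz cz' : S → ℝ≥0)
    (hz : IsDivChoice q z cz) (hz' : IsDivChoice q z' cz')
    (h1 : ∀ e, cz e ≤ z' e) (h2 : ∀ e, z' e ≤ z e) :
    cz' = cz := by
  rcases hz with ⟨hsum, hcz⟩ | ⟨-, r, hr, hcz⟩
  · subst cz
    have hz'z : z' = z := funext fun e => le_antisymm (h2 e) (h1 e)
    subst hz'z
    exact hz'.eq_self_of_sum_le hsum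
  · subst cz
    have htrunc : (fun e => min r (z' e)) = fun e => min r (z e) :=
      funext fun e => min_eq_min_of_min_le_of_le (h1 e) (h2 e)
    rw [← htrunc] at hr ⊢
    exact hz'.eq_truncate_of_sum_truncate_eq hr
end

section
/- The diversifying choice function is persistent: for all z, z' : S → ℝ≥0, if z' ≤ z pointwise, then C(z) ∧ z' ≤ C(z') pointwise, where ∧ denotes the pointwise minimum. -/
/-!
Both choices are truncations, `C(z) = min r z` and `C(z') = min r' z'` (when `z'` is not cut,
`C(z') = z'` and there is nothing to show). If `r ≤ r'` the claim is immediate. If `r' < r`, then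
`∑ min r' z' = q = ∑ min r z ≥ ∑ min r z' ≥ ∑ min r' z'`, so raising the cutting height of `z'`
from `r'` to `r` changes no coordinate, and `min r z ∧ z' ≤ min r z' = min r' z'`.
-/

open scoped NNReal

open Finset

theorem min_le_min_of_sum_min_le {ι M : Type*} [Fintype ι] [AddCommMonoid M] [LinearOrder M]
    [IsOrderedCancelAddMonoid M] {r r' : M} {f g : ι → M} (hfg : ∀ i, f i ≤ g i)
    (hsum : ∑ i, min r (g i) ≤ ∑ i, min r' (f i)) (i : ι) :
    min r (f i) ≤ min r' (f i) := by
  by_contra! hlt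
  have hr : r' ≤ r := le_of_not_ge fun h => hlt.not_ge (min_le_min_right _ h)
  have hstrict : ∑ j, min r' (f j) < ∑ j, min r (f j) :=
    sum_lt_sum (fun j _ => min_le_min_right _ hr) ⟨i, mem_univ i, hlt⟩
  exact (hstrict.trans_le (sum_le_sum fun j _ => min_le_min_left r (hfg j))).not_ge hsum

theorem IsDivChoice.exists_cut_of_lt {S : Type*} [Fintype S] {q : ℝ≥0} {z cz : S → ℝ≥0}
    (hz : IsDivChoice q z cz) (hq : q < ∑ e, z e) :
    ∃ r : ℝ≥0, ∑ e, min r (z e) = q ∧ cz = fun e => min r (z e) := by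
  rcases hz with ⟨hle, -⟩ | ⟨-, hcut⟩
  · exact absurd hq hle.not_gt
  · exact hcut

/-- The diversifying choice function is persistent: if `z' ≤ z`
pointwise, then `C(z) ∧ z' ≤ C(z')` pointwise (where `∧` is the pointwise minimum). -/
theorem divChoice_persistent {S : Type*} [Fintype S] (q : ℝ≥0) (z z' cz cz' : S → ℝ≥0)
    (h : ∀ e, z' e ≤ z e) (hz : IsDivChoice q z cz) (hz' : IsDivChoice q z' cz') :
    ∀ e, min (cz e) (z' e) ≤ cz' e := by
  intro e
  rcases hz' with ⟨-, rfl⟩ | ⟨hq', r', hr', rfl⟩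
  · exact min_le_right _ _
  obtain ⟨r, hr, rfl⟩ := hz.exists_cut_of_lt (hq'.trans_le (sum_le_sum fun i _ => h i))
  calc min (min r (z e)) (z' e) ≤ min r (z' e) := min_le_min_right _ (min_le_left _ _)
    _ ≤ min r' (z' e) := min_le_min_of_sum_min_le h (hr.trans hr'.symm).le e
end

section
/- The revealed preference relation of the diversifying choice function is transitive: for all rational x, y, w : S → ℝ≥0 (i.e. C(x) = x, C(y) = y, C(w) = w), if C(x ∨ y) = x and C(y ∨ w) = y, then C(x ∨ w) = x. -/
open scoped NNReal

/-! Both hypotheses say that `x` is obtained from `x ∨ y` (resp. `y` from `y ∨ w`) either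
without cutting anything, or by cutting exactly at the top level of `x` while exhausting
the quota. If `y ≤ x` and `y` exhausts the quota, then `x = y` since `|x| ≤ q`. Otherwise
`x` sits at the quota, and wherever `w` exceeds `x` either `y` already exceeds `x`, or `y`
is cut there at its own top level, which lies above a coordinate where `y` exceeds `x`;
in both cases `x` is at its top level there, so `x` is also the cut of `x ∨ w`. -/

section

variable {S : Type*} [Fintype S] {q : ℝ≥0}

/-- `w` is a truncation of `z` at the top level of `w` that exhausts the quota `q`. -/
def IsTopCut (q : ℝ≥0) (z w : S → ℝ≥0) : Prop :=
  w ≤ z ∧ ∑ e, w e = q ∧ ∀ e, w e < z e → ∀ e', w e' ≤ w e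

lemma IsDivChoice.sum_le {z w : S → ℝ≥0} (h : IsDivChoice q z w) : ∑ e, w e ≤ q := by
  rcases h with ⟨hz, rfl⟩ | ⟨-, r, hr, rfl⟩
  exacts [hz, hr.le]

lemma IsDivChoice.eq_or_isTopCut {z w : S → ℝ≥0} (h : IsDivChoice q z w) :
    w = z ∨ IsTopCut q z w := by
  rcases h with ⟨-, rfl⟩ | ⟨-, r, hr, rfl⟩
  · exact .inl rfl
  refine .inr ⟨fun e => min_le_right _ _, hr, fun e he e' => ?_⟩
  have hcut : min r (z e) = r :=
    min_eq_left_iff.mpr (le_of_not_ge fun h => he.ne (min_eq_right h))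
  show min r (z e') ≤ min r (z e)
  rw [hcut]
  exact min_le_left _ _

lemma IsTopCut.isDivChoice {z w : S → ℝ≥0} (h : IsTopCut q z w) : IsDivChoice q z w := by
  obtain ⟨hwz, hsum, htop⟩ := h
  obtain rfl | hlt := hwz.eq_or_lt
  · exact .inl ⟨hsum.le, rfl⟩
  obtain ⟨-, e₀, he₀⟩ := Pi.lt_def.mp hlt
  -- the cutting height is the top level of `w`, attained at any coordinate that was cut
  have hcut : ∀ e, min (w e₀) (z e) = w e := fun e => by
    obtain heq | he := (hwz e).eq_or_lt
    · exact heq ▸ min_eq_right (htop e₀ he₀ e)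
    · exact (le_antisymm (htop e₀ he₀ e) (htop e he e₀)) ▸ min_eq_left he.le
  refine .inr ⟨hsum ▸ Fintype.sum_strictMono hlt, w e₀, ?_, funext fun e => (hcut e).symm⟩
  simpa only [hcut] using hsum

/-- For `x` with `|x| ≤ q`, this is the revealed preference `x ⪰ y`. -/
def RevealedPref (q : ℝ≥0) (x y : S → ℝ≥0) : Prop :=
  y ≤ x ∨ (∑ e, x e = q ∧ ∀ e, x e < y e → ∀ e', x e' ≤ x e)

lemma isTopCut_sup_iff {x y : S → ℝ≥0} :
    IsTopCut q (x ⊔ y) x ↔ ∑ e, x e = q ∧ ∀ e, x e < y e → ∀ e', x e' ≤ x e := by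
  simp only [IsTopCut, le_sup_left, true_and, Pi.sup_apply, lt_sup_iff, lt_self_iff_false,
    false_or]

lemma isDivChoice_sup_iff_revealedPref {x y : S → ℝ≥0} (hx : ∑ e, x e ≤ q) :
    IsDivChoice q (x ⊔ y) x ↔ RevealedPref q x y := by
  refine ⟨fun h => ?_, fun h => ?_⟩
  · rcases h.eq_or_isTopCut with h | h
    exacts [.inl (sup_eq_left.mp h.symm), .inr (isTopCut_sup_iff.mp h)]
  · rcases h with h | h
    exacts [.inl ⟨(sup_eq_left.mpr h).symm ▸ hx, (sup_eq_left.mpr h).symm⟩,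
      (isTopCut_sup_iff.mpr h).isDivChoice]

lemma RevealedPref.of_isDivChoice_sup {x y : S → ℝ≥0} (h : IsDivChoice q (x ⊔ y) x) :
    RevealedPref q x y :=
  (isDivChoice_sup_iff_revealedPref h.sum_le).mp h

lemma RevealedPref.trans {x y w : S → ℝ≥0} (hx : ∑ e, x e ≤ q)
    (hxy : RevealedPref q x y) (hyw : RevealedPref q y w) : RevealedPref q x w := by
  by_cases hyx : y ≤ x
  · rcases hyw with hwy | ⟨hy, hytop⟩
    · exact .inl (hwy.trans hyx)
    · obtain rfl : y = x :=
        eq_of_le_of_not_lt hyx fun h => (Fintype.sum_strictMono h).not_ge (hx.trans hy.ge)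
      exact .inr ⟨hy, hytop⟩
  obtain ⟨hxsum, hxtop⟩ := hxy.resolve_left hyx
  obtain ⟨e₁, he₁⟩ : ∃ e₁, x e₁ < y e₁ := by simpa [Pi.le_def] using hyx
  refine .inr ⟨hxsum, fun e he e' => ?_⟩
  obtain hxy | hyx := lt_or_ge (x e) (y e)
  · exact hxtop e hxy e'
  have hylt : y e < w e := hyx.trans_lt he
  have hytop : y e₁ ≤ y e := by
    rcases hyw with hwy | ⟨-, hytop⟩
    exacts [absurd (hwy e) hylt.not_ge, hytop e hylt e₁]
  exact (hxtop e₁ he₁ e').trans (he₁.trans_le (hytop.trans hyx)).le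

end

theorem divChoice_pref_trans_general {S : Type*} [Fintype S] (q : ℝ≥0) (x y w : S → ℝ≥0)
    (hx : IsDivChoice q x x)
    (hxy : IsDivChoice q (fun e => max (x e) (y e)) x)
    (hyw : IsDivChoice q (fun e => max (y e) (w e)) y) :
    IsDivChoice q (fun e => max (x e) (w e)) x :=
  (isDivChoice_sup_iff_revealedPref hx.sum_le).mpr <|
    (RevealedPref.of_isDivChoice_sup hxy).trans hx.sum_le (.of_isDivChoice_sup hyw)

/-- The revealed preference relation of the diversifying choice
function is transitive: for rational `x, y, w`, if `C(x ∨ y) = x` and `C(y ∨ w) = y`,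
then `C(x ∨ w) = x`. -/
theorem divChoice_pref_trans {S : Type*} [Fintype S] (q : ℝ≥0) (x y w : S → ℝ≥0)
    (hx : IsDivChoice q x x) (hy : IsDivChoice q y y) (hw : IsDivChoice q w w)
    (hxy : IsDivChoice q (fun e => max (x e) (y e)) x)
    (hyw : IsDivChoice q (fun e => max (y e) (w e)) y) :
    IsDivChoice q (fun e => max (x e) (w e)) x :=
  divChoice_pref_trans_general q x y w hx hxy hyw
end

section
/- For the diversifying choice function, C(z ∨ z') is the join of rational vectors z and z' with respect to revealed preference: if z, z' : S → ℝ≥0 are rational, then C(z ∨ z') is rational, C(z ∨ z') ⪰ z and C(z ∨ z') ⪰ z', and every rational w with w ⪰ z and w ⪰ z' satisfies w ⪰ C(z ∨ z'). -/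
/-!
Write `w ⪰ x` for `C(w ∨ x) = w`. It holds exactly when `∑ w ≤ q` and every coordinate at
which `x` exceeds `w` is a coordinate where `w` is cut: the quota is exhausted and `w` is at its
maximal level there. This condition is inherited by every `y ≤ x` and by the join of two vectors
satisfying it, which makes `w ⪰ z, z'` imply `w ⪰ C(z ∨ z') ≤ z ∨ z'`. Conversely `C(m) ⪰ x`
for every `x ≤ m`, since `C(m)` falls below `m` only at its cutting height.
-/

open scoped NNReal

section

open Finset

variable {S : Type*} [Fintype S] {q : ℝ≥0}

theorem isDivChoice_self {w : S → ℝ≥0} (h : ∑ e, w e ≤ q) : IsDivChoice q w w :=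
  Or.inl ⟨h, rfl⟩

/-- The condition `q < ∑ m` in the cutting branch of `IsDivChoice` may be dropped. -/
theorem isDivChoice_iff {m w : S → ℝ≥0} :
    IsDivChoice q m w ↔
      (∑ e, m e ≤ q ∧ w = m) ∨ (∑ e, w e = q ∧ ∃ s, ∀ e, w e = min s (m e)) := by
  constructor
  · rintro (h | ⟨-, s, hs, rfl⟩)
    · exact Or.inl h
    · exact Or.inr ⟨hs, s, fun _ => rfl⟩
  · rintro (h | ⟨hq, s, hs⟩)
    · exact Or.inl h
    obtain rfl : w = fun e => min s (m e) := funext hs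
    by_cases hm : ∑ e, m e ≤ q
    · refine Or.inl ⟨hm, funext fun e => ?_⟩
      have hle : ∀ e ∈ univ, min s (m e) ≤ m e := fun e _ => min_le_right _ _
      exact (sum_eq_sum_iff_of_le hle).mp (le_antisymm (sum_le_sum hle) (hq ▸ hm)) e
        (mem_univ e)
    · exact Or.inr ⟨not_le.mp hm, s, hq, rfl⟩

namespace IsDivChoice

variable {m w : S → ℝ≥0}

theorem sum_le_s6 (h : IsDivChoice q m w) : ∑ e, w e ≤ q := by
  rcases isDivChoice_iff.mp h with ⟨hm, rfl⟩ | ⟨hq, -⟩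
  exacts [hm, hq.le]

theorem le (h : IsDivChoice q m w) : w ≤ m := by
  rcases isDivChoice_iff.mp h with ⟨-, rfl⟩ | ⟨-, s, hs⟩
  exacts [le_rfl, fun e => (hs e).trans_le (min_le_right _ _)]

theorem sum_eq_and_le_of_lt (h : IsDivChoice q m w) {e : S} (he : w e < m e) :
    ∑ e, w e = q ∧ ∀ e', w e' ≤ w e := by
  rcases isDivChoice_iff.mp h with ⟨-, rfl⟩ | ⟨hq, s, hs⟩
  · exact absurd he (lt_irrefl _)
  have hes : w e = s :=
    (hs e).trans ((min_choice s (m e)).resolve_right fun h' => he.ne ((hs e).trans h'))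
  exact ⟨hq, fun e' => hes ▸ (hs e').trans_le (min_le_left _ _)⟩

end IsDivChoice

/-- Revealed preference `w ⪰ x` for the diversifying choice function with quota `q`. -/
def Prefers (q : ℝ≥0) (w x : S → ℝ≥0) : Prop :=
  IsDivChoice q (fun e => max (w e) (x e)) w

theorem prefers_iff {w x : S → ℝ≥0} :
    Prefers q w x ↔ ∑ e, w e ≤ q ∧ ∀ e, w e < x e → ∑ e, w e = q ∧ ∀ e', w e' ≤ w e := by
  constructor
  · intro h
    exact ⟨h.sum_le_s6, fun e he => h.sum_eq_and_le_of_lt (lt_max_of_lt_right he)⟩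
  rintro ⟨hle, hcut⟩
  by_cases hx : ∀ e, x e ≤ w e
  · have hmax : (fun e => max (w e) (x e)) = w := funext fun e => max_eq_left (hx e)
    show IsDivChoice q _ w
    rw [hmax]
    exact isDivChoice_self hle
  obtain ⟨e₀, he₀⟩ := not_forall.mp hx
  obtain ⟨hq, htop⟩ := hcut e₀ (not_le.mp he₀)
  refine isDivChoice_iff.mpr (Or.inr ⟨hq, w e₀, fun e => ?_⟩)
  rcases le_or_gt (x e) (w e) with h | h
  · rw [max_eq_left h, min_eq_right (htop e)]
  · have hee₀ : w e = w e₀ := le_antisymm (htop e) ((hcut e h).2 e₀)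
    rw [max_eq_right h.le, min_eq_left (hee₀ ▸ h.le), hee₀]

namespace Prefers

variable {w x y : S → ℝ≥0}

theorem anti (h : Prefers q w x) (hyx : y ≤ x) : Prefers q w y := by
  obtain ⟨hle, hcut⟩ := prefers_iff.mp h
  exact prefers_iff.mpr ⟨hle, fun e he => hcut e (he.trans_le (hyx e))⟩

theorem max (hx : Prefers q w x) (hy : Prefers q w y) :
    Prefers q w fun e => max (x e) (y e) := by
  obtain ⟨hle, hcutx⟩ := prefers_iff.mp hx
  obtain ⟨-, hcuty⟩ := prefers_iff.mp hy
  refine prefers_iff.mpr ⟨hle, fun e he => ?_⟩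
  rcases lt_max_iff.mp he with h | h
  exacts [hcutx e h, hcuty e h]

end Prefers

theorem IsDivChoice.prefers_of_le {m c x : S → ℝ≥0} (hc : IsDivChoice q m c) (hxm : x ≤ m) :
    Prefers q c x :=
  prefers_iff.mpr ⟨hc.sum_le_s6, fun _ he => hc.sum_eq_and_le_of_lt (he.trans_le (hxm _))⟩

end

theorem divChoice_join_general {S : Type*} [Fintype S] (q : ℝ≥0) (z z' c : S → ℝ≥0)
    (hc : IsDivChoice q (fun e => max (z e) (z' e)) c) :
    IsDivChoice q c c ∧
    IsDivChoice q (fun e => max (c e) (z e)) c ∧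
    IsDivChoice q (fun e => max (c e) (z' e)) c ∧
    ∀ w : S → ℝ≥0, IsDivChoice q w w →
      IsDivChoice q (fun e => max (w e) (z e)) w →
      IsDivChoice q (fun e => max (w e) (z' e)) w →
      IsDivChoice q (fun e => max (w e) (c e)) w :=
  ⟨isDivChoice_self hc.sum_le_s6,
    hc.prefers_of_le fun e => le_max_left (z e) (z' e),
    hc.prefers_of_le fun e => le_max_right (z e) (z' e),
    fun _ _ hwz hwz' => Prefers.anti (Prefers.max hwz hwz') hc.le⟩

/-- For rational `z, z'`, the vector `C(z ∨ z')` is the join of `z`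
and `z'` with respect to revealed preference: it is rational, preferred to both `z` and
`z'`, and any rational `w` preferred to both `z` and `z'` is preferred to `C(z ∨ z')`. -/
theorem divChoice_join {S : Type*} [Fintype S] (q : ℝ≥0) (z z' c : S → ℝ≥0)
    (hz : IsDivChoice q z z) (hz' : IsDivChoice q z' z')
    (hc : IsDivChoice q (fun e => max (z e) (z' e)) c) :
    IsDivChoice q c c ∧
    IsDivChoice q (fun e => max (c e) (z e)) c ∧
    IsDivChoice q (fun e => max (c e) (z' e)) c ∧
    ∀ w : S → ℝ≥0, IsDivChoice q w w →
      IsDivChoice q (fun e => max (w e) (z e)) w →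
      IsDivChoice q (fun e => max (w e) (z' e)) w →
      IsDivChoice q (fun e => max (w e) (c e)) w :=
  divChoice_join_general q z z' c hc
end

section
/- Let z, z' : S → ℝ≥0 be rational for the diversifying choice function, with z fully filling (|z| = q). Then z ⪰ z' (i.e. C(z ∨ z') = z) if and only if z(e) ≥ z'(e) for all e in the tail T(z). -/
open scoped NNReal

/-- The head `H(z)` of a rational vector `z`: if `z` is fully filling (`∑ e, z e = q`)
it is the set of coordinates where `z` attains its maximum, and otherwise it is `∅`. -/
def divHead {S : Type*} [Fintype S] (q : ℝ≥0) (z : S → ℝ≥0) : Set S :=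
  {e | (∑ e', z e') = q ∧ z e = Finset.univ.sup z}

/-- The tail `T(z)` is the complement of the head. -/
def divTail {S : Type*} [Fintype S] (q : ℝ≥0) (z : S → ℝ≥0) : Set S :=
  {e | e ∉ divHead q z}

/-!
Since `z ≤ z ∨ z'` and `|z| = q`, the choice `C(z ∨ z') = z` holds exactly when `z` is a
truncation `min r (z ∨ z')` of `z ∨ z'` at some height `r`: either no truncation is needed, or the
truncation has mass `|z| = q`. A truncation changes only coordinates above its height, and
`z` reaches that height only on its head; cutting at `max z` works as soon as `z ∨ z'` agrees
with `z` on the tail.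
-/

theorem isDivChoice_iff_exists_eq_min_of_le {S : Type*} [Fintype S] {q : ℝ≥0} {z w : S → ℝ≥0}
    (hle : z ≤ w) (hz : ∑ e, z e = q) :
    IsDivChoice q w z ↔ ∃ r : ℝ≥0, ∀ e, z e = min r (w e) := by
  constructor
  · rintro (⟨-, rfl⟩ | ⟨-, r, -, rfl⟩)
    · exact ⟨Finset.univ.sup z, fun e => (min_eq_right (Finset.le_sup (Finset.mem_univ e))).symm⟩
    · exact ⟨r, fun _ => rfl⟩
  · rintro ⟨r, hr⟩
    have hzr : z = fun e => min r (w e) := funext hr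
    by_cases hw : ∑ e, w e ≤ q
    · have hsum : ∑ e, w e = ∑ e, z e :=
        le_antisymm (hz ▸ hw) (Finset.sum_le_sum fun e _ => hle e)
      have hwz : w = z := funext fun e =>
        ((Finset.sum_eq_sum_iff_of_le fun e _ => hle e).mp hsum.symm e (Finset.mem_univ e)).symm
      exact Or.inl ⟨hw, hwz.symm⟩
    · exact Or.inr ⟨not_le.mp hw, r, by rw [← hz, hzr], hzr⟩

theorem exists_eq_min_iff_of_le {S α : Type*} [Fintype S] [LinearOrder α] [OrderBot α]
    {z w : S → α} (hle : z ≤ w) :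
    (∃ r, ∀ e, z e = min r (w e)) ↔ ∀ e, z e < Finset.univ.sup z → w e ≤ z e := by
  constructor
  · rintro ⟨r, hr⟩ e he
    obtain ⟨e₀, -, he₀⟩ := Finset.exists_mem_eq_sup Finset.univ ⟨e, Finset.mem_univ e⟩ z
    have her : z e < r := he.trans_le (he₀ ▸ hr e₀ ▸ min_le_left _ _)
    have hwr : w e < r := (min_lt_iff.mp (hr e ▸ her)).resolve_left (lt_irrefl r)
    rw [hr e, min_eq_right hwr.le]
  · intro h
    refine ⟨Finset.univ.sup z, fun e => ?_⟩
    rcases (Finset.le_sup (f := z) (Finset.mem_univ e)).lt_or_eq with he | he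
    · rw [min_eq_right ((h e he).trans (Finset.le_sup (Finset.mem_univ e)))]
      exact le_antisymm (hle e) (h e he)
    · rw [he, min_eq_left (he ▸ hle e)]

theorem mem_divTail_iff_lt_sup {S : Type*} [Fintype S] {q : ℝ≥0} {z : S → ℝ≥0}
    (hz : ∑ e, z e = q) {e : S} : e ∈ divTail q z ↔ z e < Finset.univ.sup z := by
  simp only [divTail, divHead, Set.mem_ofPred_eq, hz, true_and]
  exact (Finset.le_sup (Finset.mem_univ e)).lt_iff_ne.symm

theorem divChoice_pref_iff_tail_general {S : Type*} [Fintype S] (q : ℝ≥0) (z z' : S → ℝ≥0)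
    (hfull : (∑ e, z e) = q) :
    IsDivChoice q (fun e => max (z e) (z' e)) z ↔ ∀ e ∈ divTail q z, z' e ≤ z e := by
  have hle : z ≤ fun e => max (z e) (z' e) := fun e => le_max_left _ _
  rw [isDivChoice_iff_exists_eq_min_of_le hle hfull, exists_eq_min_iff_of_le hle]
  simp only [mem_divTail_iff_lt_sup hfull, max_le_iff, le_refl, true_and]

/-- For rational `z, z'` with `z` fully filling (`|z| = q`):
`z ⪰ z'` (i.e. `C(z ∨ z') = z`) if and only if `z e ≥ z' e` for all `e` in the tail
`T(z)`. -/
theorem divChoice_pref_iff_tail {S : Type*} [Fintype S] (q : ℝ≥0) (z z' : S → ℝ≥0)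
    (hz : IsDivChoice q z z) (hz' : IsDivChoice q z' z')
    (hfull : (∑ e, z e) = q) :
    IsDivChoice q (fun e => max (z e) (z' e)) z ↔ ∀ e ∈ divTail q z, z' e ≤ z e :=
  divChoice_pref_iff_tail_general q z z' hfull
end

section
/- Let x, y : S → ℝ≥0 be rational for the diversifying choice function with x fully filling (|x| = q) and x ⪰ y (i.e. C(x ∨ y) = x). If e, e' ∈ S satisfy x(e) < y(e) and x(e') > y(e'), then x(e') ≤ x(e) and y(e') < y(e). -/
/-!
A diversifying choice truncates its input at some height `r` (when nothing is cut, take `r`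
above every coordinate). Since `x e < y e = (x ∨ y) e`, the truncation of `x ∨ y` to `x` cuts
coordinate `e`, so `x e = r ≥ x e'`; and then `y e' < x e' ≤ x e < y e`.
-/

open scoped NNReal

namespace IsDivChoice

variable {S : Type*} [Fintype S] {q : ℝ≥0} {z w : S → ℝ≥0}

theorem exists_eq_min (h : IsDivChoice q z w) : ∃ r : ℝ≥0, ∀ e, w e = min r (z e) := by
  rcases h with ⟨-, rfl⟩ | ⟨-, r, -, rfl⟩
  · exact ⟨Finset.univ.sup w, fun e => (min_eq_right (Finset.le_sup (Finset.mem_univ e))).symm⟩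
  · exact ⟨r, fun _ => rfl⟩

theorem le_of_lt {e : S} (h : IsDivChoice q z w) (he : w e < z e) (e' : S) : w e' ≤ w e := by
  obtain ⟨r, hr⟩ := h.exists_eq_min
  have hcut : w e = r := by
    rw [hr e] at he ⊢
    exact min_eq_left (not_lt.mp fun hz => he.ne (min_eq_right hz.le))
  exact hcut ▸ hr e' ▸ min_le_left r (z e')

end IsDivChoice

theorem divChoice_swap_ineq_general {S : Type*} [Fintype S] (q : ℝ≥0) (x y : S → ℝ≥0)
    (hpref : IsDivChoice q (fun e => max (x e) (y e)) x)
    (e e' : S) (h1 : x e < y e) (h2 : y e' < x e') :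
    x e' ≤ x e ∧ y e' < y e := by
  have hle : x e' ≤ x e := hpref.le_of_lt (h1.trans_le (le_max_right (x e) (y e))) e'
  exact ⟨hle, h2.trans_le (hle.trans h1.le)⟩

/-- Let `x, y` be rational with `x` fully filling (`|x| = q`) and
`x ⪰ y` (i.e. `C(x ∨ y) = x`). If `x e < y e` and `x e' > y e'`, then `x e' ≤ x e`
and `y e' < y e`. -/
theorem divChoice_swap_ineq {S : Type*} [Fintype S] (q : ℝ≥0) (x y : S → ℝ≥0)
    (hx : IsDivChoice q x x) (hy : IsDivChoice q y y)
    (hfull : (∑ e, x e) = q)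
    (hpref : IsDivChoice q (fun e => max (x e) (y e)) x)
    (e e' : S) (h1 : x e < y e) (h2 : y e' < x e') :
    x e' ≤ x e ∧ y e' < y e :=
  divChoice_swap_ineq_general q x y hpref e e' h1 h2
end

section
/- In the diversifying bipartite market (G, b, q) there exists exactly one stable assignment. -/
open scoped NNReal

attribute [local instance] Classical.propDecidable

/-- `IsDivChoiceOn S qv z w` asserts that, on the coordinates in the finite set `S`,
`w` agrees with the value of the diversifying choice function with quota `qv` applied
to the restriction of `z` to `S`: if `∑_{e ∈ S} z e ≤ qv` then the choice is `z` itself,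
and otherwise it is `e ↦ min r (z e)`, where `r ≥ 0` is the (unique) cutting height
satisfying `∑_{e ∈ S} min r (z e) = qv`. -/
def IsDivChoiceOn {E : Type*} (S : Finset E) (qv : ℝ≥0) (z w : E → ℝ≥0) : Prop :=
  ((∑ e ∈ S, z e) ≤ qv ∧ ∀ e ∈ S, w e = z e) ∨
    (qv < (∑ e ∈ S, z e) ∧
      ∃ r : ℝ≥0, (∑ e ∈ S, min r (z e)) = qv ∧ ∀ e ∈ S, w e = min r (z e))

/-- The head `H(x_v)` of `x` at a vertex whose set of incident edges is `S` and whose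
quota is `qv`: the set of edges of `S` where `x` attains its maximum over `S`, provided
`∑_{e ∈ S} x e = qv`, and `∅` otherwise. -/
def headOn {E : Type*} (S : Finset E) (qv : ℝ≥0) (x : E → ℝ≥0) : Set E :=
  {e | e ∈ S ∧ (∑ e' ∈ S, x e') = qv ∧ x e = S.sup x}

/-- An edge `e` is satiated for a vertex with incident edges `S` and quota `qv`
(w.r.t. capacities `b` and assignment `x`) if `e ∈ H(x_v) ∪ U(x_v)`,
i.e. `e` is in the head or its capacity is attained. -/
def satiatedOn {E : Type*} (S : Finset E) (qv : ℝ≥0) (b x : E → ℝ≥0) (e : E) : Prop :=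
  e ∈ headOn S qv x ∨ x e = b e

/-- The set of edges incident to firm `i` (edges `e` with `firm e = i`). -/
noncomputable def firmEdges {E F : Type*} [Fintype E] (firm : E → F) (i : F) : Finset E :=
  Finset.univ.filter fun e => firm e = i

/-- The set of edges incident to worker `j` (edges `e` with `worker e = j`). -/
noncomputable def workerEdges {E W : Type*} [Fintype E] (worker : E → W) (j : W) : Finset E :=
  Finset.univ.filter fun e => worker e = j

/-- A stable assignment of the diversifying bipartite market: the finite bipartite
(multi)graph has parts `F` (firms) and `W` (workers) and edge set `E`, the edge `e`
joining firm `firm e` to worker `worker e`; `b` gives edge capacities and `qF`, `qW`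
the vertex quotas. An assignment `x : E → ℝ≥0` is stable if it is admissible (`x ≤ b`),
rational at every vertex (`C_v(x_v) = x_v`), and has no blocking edge, i.e. every edge
is satiated for at least one of its two endpoints. -/
def StableBip {E F W : Type*} [Fintype E] (firm : E → F) (worker : E → W)
    (b : E → ℝ≥0) (qF : F → ℝ≥0) (qW : W → ℝ≥0) (x : E → ℝ≥0) : Prop :=
  (∀ e, x e ≤ b e) ∧
  (∀ i : F, IsDivChoiceOn (firmEdges firm i) (qF i) x x) ∧
  (∀ j : W, IsDivChoiceOn (workerEdges worker j) (qW j) x x) ∧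
  ∀ e : E, satiatedOn (firmEdges firm (firm e)) (qF (firm e)) b x e ∨
    satiatedOn (workerEdges worker (worker e)) (qW (worker e)) b x e


/-!
Give every vertex a level in `[0, ∞]` and fill each edge up to the least of its capacity and
the levels of its two endpoints. A firm's level should be the cutting height of its edges, each
bounded by its capacity and its worker's level, and symmetrically for workers. Solving the worker
side for given firm levels is antitone in them, so the resulting map on firm levels is monotone
and has a fixed point by Knaster–Tarski. The filling then keeps every vertex within quota, and an
edge below capacity sits at the finite level of one endpoint, which is therefore full with that
edge on top: the edge is in its head.

For uniqueness, let `x ≠ y` be stable and pick an edge `e` where they differ with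
`max (x e) (y e)` least, say `y e < x e`. Then `e` is below capacity for `y`, so it lies in the
head of `y` at some vertex; there `y` fills the quota while `x` stays within it, so some edge `e'`
there has `x e' < y e' ≤ y e`, contradicting the choice of `e`.
-/

open scoped ENNReal

section WaterLevel

variable {E : Type*}

/-- The cutting height `r` of the diversifying choice function, for the vertex with edges `S`,
quota `q` and edge bounds `c`; it is `⊤` when the bounds alone keep the vertex within quota. -/
noncomputable def waterLevel (S : Finset E) (c : E → ℝ≥0∞) (q : ℝ≥0∞) : ℝ≥0∞ :=
  sSup {t | ∑ e ∈ S, min (c e) t ≤ q}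

lemma continuous_sum_min (S : Finset E) (c : E → ℝ≥0∞) :
    Continuous fun t : ℝ≥0∞ => ∑ e ∈ S, min (c e) t :=
  continuous_finsetSum S fun _ _ => continuous_const.min continuous_id

lemma sum_min_waterLevel_le (S : Finset E) (c : E → ℝ≥0∞) (q : ℝ≥0∞) :
    ∑ e ∈ S, min (c e) (waterLevel S c q) ≤ q :=
  IsClosed.sSup_mem ⟨0, by simp⟩ (isClosed_le (continuous_sum_min S c) continuous_const)

lemma le_sum_min_waterLevel {S : Finset E} {c : E → ℝ≥0∞} {q : ℝ≥0∞}
    (hL : waterLevel S c q ≠ ⊤) : q ≤ ∑ e ∈ S, min (c e) (waterLevel S c q) := by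
  set L := waterLevel S c q
  have above : Set.Ioi L ⊆ {t | q ≤ ∑ e ∈ S, min (c e) t} := fun t ht =>
    Set.mem_ofPred.mpr (le_of_not_ge fun hle => (le_sSup hle : t ≤ L).not_gt ht)
  have hclosed : Set.Ici L ⊆ {t | q ≤ ∑ e ∈ S, min (c e) t} := by
    rw [← closure_Ioi' ⟨⊤, lt_top_iff_ne_top.mpr hL⟩]
    exact closure_minimal above (isClosed_le continuous_const (continuous_sum_min S c))
  exact hclosed Set.self_mem_Ici

lemma waterLevel_anti {S : Finset E} {c c' : E → ℝ≥0∞} {q : ℝ≥0∞}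
    (h : ∀ e ∈ S, c e ≤ c' e) : waterLevel S c' q ≤ waterLevel S c q :=
  sSup_le_sSup fun _ ht => (Finset.sum_le_sum fun e he => min_le_min_right _ (h e he)).trans ht

variable {S : Finset E} {qv : ℝ≥0} {c : E → ℝ≥0∞} {x : E → ℝ≥0}

lemma sum_le_of_eq_min_waterLevel
    (hx : ∀ e ∈ S, (x e : ℝ≥0∞) = min (c e) (waterLevel S c qv)) : ∑ e ∈ S, x e ≤ qv := by
  rw [← ENNReal.coe_le_coe, ENNReal.ofNNReal_finsetSum, Finset.sum_congr rfl hx]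
  exact sum_min_waterLevel_le S c qv

lemma mem_headOn_of_eq_waterLevel
    (hx : ∀ e ∈ S, (x e : ℝ≥0∞) = min (c e) (waterLevel S c qv)) {e : E} (he : e ∈ S)
    (hxe : (x e : ℝ≥0∞) = waterLevel S c qv) : e ∈ headOn S qv x := by
  have hsum : ∑ e' ∈ S, x e' = qv := by
    refine le_antisymm (sum_le_of_eq_min_waterLevel hx) ?_
    rw [← ENNReal.coe_le_coe, ENNReal.ofNNReal_finsetSum, Finset.sum_congr rfl hx]
    exact le_sum_min_waterLevel (hxe ▸ ENNReal.coe_ne_top)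
  refine ⟨he, hsum, le_antisymm (Finset.le_sup he) (Finset.sup_le fun e' he' => ?_)⟩
  rw [← ENNReal.coe_le_coe, hx e' he', hxe]
  exact min_le_right _ _

end WaterLevel

lemma isDivChoiceOn_self_iff {E : Type*} {S : Finset E} {qv : ℝ≥0} {x : E → ℝ≥0} :
    IsDivChoiceOn S qv x x ↔ ∑ e ∈ S, x e ≤ qv := by
  refine ⟨?_, fun h => Or.inl ⟨h, fun _ _ => rfl⟩⟩
  rintro (⟨h, -⟩ | ⟨-, r, hr, hx⟩)
  · exact h
  · exact ((Finset.sum_congr rfl hx).trans hr).le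

section Existence

variable {E F W : Type*} [Fintype E]
variable (firm : E → F) (worker : E → W) (b : E → ℝ≥0) (qF : F → ℝ≥0) (qW : W → ℝ≥0)

noncomputable def workerLevel (ρ : F → ℝ≥0∞) (j : W) : ℝ≥0∞ :=
  waterLevel (workerEdges worker j) (fun e => min (b e : ℝ≥0∞) (ρ (firm e))) (qW j)

noncomputable def firmLevelResponse (ρ : F → ℝ≥0∞) (i : F) : ℝ≥0∞ :=
  waterLevel (firmEdges firm i)
    (fun e => min (b e : ℝ≥0∞) (workerLevel firm worker b qW ρ (worker e))) (qF i)

lemma workerLevel_anti {ρ ρ' : F → ℝ≥0∞} (h : ρ ≤ ρ') :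
    workerLevel firm worker b qW ρ' ≤ workerLevel firm worker b qW ρ := fun _ =>
  waterLevel_anti fun _ _ => min_le_min_left _ (h _)

lemma firmLevelResponse_mono : Monotone (firmLevelResponse firm worker b qF qW) :=
  fun _ _ h _ =>
    waterLevel_anti fun _ _ => min_le_min_left _ (workerLevel_anti firm worker b qW h _)

noncomputable def firmLevel : F → ℝ≥0∞ :=
  OrderHom.lfp ⟨_, firmLevelResponse_mono firm worker b qF qW⟩

lemma firmLevelResponse_firmLevel :
    firmLevelResponse firm worker b qF qW (firmLevel firm worker b qF qW) =
      firmLevel firm worker b qF qW :=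
  OrderHom.map_lfp ⟨_, firmLevelResponse_mono firm worker b qF qW⟩

lemma firmLevel_eq_waterLevel (i : F) :
    firmLevel firm worker b qF qW i = waterLevel (firmEdges firm i)
      (fun e => min (b e : ℝ≥0∞) (workerLevel firm worker b qW (firmLevel firm worker b qF qW)
        (worker e))) (qF i) :=
  (congrFun (firmLevelResponse_firmLevel firm worker b qF qW) i).symm

noncomputable def levelAssignment (e : E) : ℝ≥0 :=
  (min (b e : ℝ≥0∞) (min (firmLevel firm worker b qF qW (firm e))
    (workerLevel firm worker b qW (firmLevel firm worker b qF qW) (worker e)))).toNNReal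

lemma coe_levelAssignment (e : E) :
    (levelAssignment firm worker b qF qW e : ℝ≥0∞) =
      min (b e : ℝ≥0∞) (min (firmLevel firm worker b qF qW (firm e))
        (workerLevel firm worker b qW (firmLevel firm worker b qF qW) (worker e))) :=
  ENNReal.coe_toNNReal ((min_le_left _ _).trans_lt ENNReal.coe_lt_top).ne

lemma levelAssignment_stable :
    StableBip firm worker b qF qW (levelAssignment firm worker b qF qW) := by
  set ρ := firmLevel firm worker b qF qW
  set σ := workerLevel firm worker b qW ρ
  set x := levelAssignment firm worker b qF qW
  have atFirm : ∀ i, ∀ e ∈ firmEdges firm i, (x e : ℝ≥0∞) =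
      min (min (b e : ℝ≥0∞) (σ (worker e))) (waterLevel (firmEdges firm i)
        (fun e => min (b e : ℝ≥0∞) (σ (worker e))) (qF i)) := by
    intro i e he
    rw [(Finset.mem_filter.mp he).2.symm, coe_levelAssignment, ← firmLevel_eq_waterLevel,
      min_comm (ρ _), min_assoc]
  have atWorker : ∀ j, ∀ e ∈ workerEdges worker j, (x e : ℝ≥0∞) =
      min (min (b e : ℝ≥0∞) (ρ (firm e))) (waterLevel (workerEdges worker j)
        (fun e => min (b e : ℝ≥0∞) (ρ (firm e))) (qW j)) := by
    intro j e he
    rw [(Finset.mem_filter.mp he).2.symm, coe_levelAssignment, min_assoc]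
    rfl
  refine ⟨fun e => ?_, fun i => isDivChoiceOn_self_iff.mpr
    (sum_le_of_eq_min_waterLevel (atFirm i)), fun j => isDivChoiceOn_self_iff.mpr
    (sum_le_of_eq_min_waterLevel (atWorker j)), fun e => ?_⟩
  · rw [← ENNReal.coe_le_coe, coe_levelAssignment]
    exact min_le_left _ _
  have hF : e ∈ firmEdges firm (firm e) := Finset.mem_filter.mpr ⟨Finset.mem_univ _, rfl⟩
  have hW : e ∈ workerEdges worker (worker e) := Finset.mem_filter.mpr ⟨Finset.mem_univ _, rfl⟩
  have hx := coe_levelAssignment firm worker b qF qW e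
  rcases le_total (b e : ℝ≥0∞) (min (ρ (firm e)) (σ (worker e))) with hb | hb
  · exact Or.inl (Or.inr (by rw [← ENNReal.coe_inj, hx, min_eq_left hb]))
  rw [min_eq_right hb] at hx
  rcases le_total (ρ (firm e)) (σ (worker e)) with hρσ | hσρ
  · rw [min_eq_left hρσ] at hx
    refine Or.inl (Or.inl (mem_headOn_of_eq_waterLevel (atFirm _) hF ?_))
    exact hx.trans (firmLevel_eq_waterLevel firm worker b qF qW _)
  · rw [min_eq_right hσρ] at hx
    exact Or.inr (Or.inl (mem_headOn_of_eq_waterLevel (atWorker _) hW hx))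

end Existence

section Uniqueness

lemma exists_lt_of_mem_headOn {E : Type*} {S : Finset E} {qv : ℝ≥0} {x y : E → ℝ≥0} {e : E}
    (he : e ∈ headOn S qv y) (hx : ∑ e' ∈ S, x e' ≤ qv) (hlt : y e < x e) :
    ∃ e' ∈ S, x e' < y e' ∧ y e' ≤ y e := by
  obtain ⟨heS, hsum, hmax⟩ := he
  have : ∃ e' ∈ S, x e' < y e' := by
    by_contra! hge
    exact (hx.trans_eq hsum.symm).not_gt (Finset.sum_lt_sum hge ⟨e, heS, hlt⟩)
  obtain ⟨e', he'S, he'⟩ := this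
  exact ⟨e', he'S, he', hmax ▸ Finset.le_sup he'S⟩

variable {E F W : Type*} [Fintype E] {firm : E → F} {worker : E → W}
  {b : E → ℝ≥0} {qF : F → ℝ≥0} {qW : W → ℝ≥0} {x y : E → ℝ≥0}

lemma StableBip.exists_lt_of_lt (hx : StableBip firm worker b qF qW x)
    (hy : StableBip firm worker b qF qW y) {e : E} (hlt : y e < x e) :
    ∃ e', x e' < y e' ∧ y e' < x e := by
  obtain ⟨hxb, hxF, hxW, -⟩ := hx
  have hne : y e ≠ b e := fun h => (h ▸ hxb e).not_gt hlt
  rcases hy.2.2.2 e with (hH | hU) | (hH | hU)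
  · obtain ⟨e', -, h⟩ := exists_lt_of_mem_headOn hH (isDivChoiceOn_self_iff.mp (hxF _)) hlt
    exact ⟨e', h.1, h.2.trans_lt hlt⟩
  · exact absurd hU hne
  · obtain ⟨e', -, h⟩ := exists_lt_of_mem_headOn hH (isDivChoiceOn_self_iff.mp (hxW _)) hlt
    exact ⟨e', h.1, h.2.trans_lt hlt⟩
  · exact absurd hU hne

lemma StableBip.exists_max_lt_of_ne (hx : StableBip firm worker b qF qW x)
    (hy : StableBip firm worker b qF qW y) {e : E} (hne : x e ≠ y e) :
    ∃ e', x e' ≠ y e' ∧ max (x e') (y e') < max (x e) (y e) := by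
  rcases hne.lt_or_gt with hlt | hlt
  · obtain ⟨e', h, h'⟩ := hy.exists_lt_of_lt hx hlt
    exact ⟨e', h.ne', by rwa [max_eq_left h.le, max_eq_right hlt.le]⟩
  · obtain ⟨e', h, h'⟩ := hx.exists_lt_of_lt hy hlt
    exact ⟨e', h.ne, by rwa [max_eq_right h.le, max_eq_left hlt.le]⟩

lemma StableBip.eq (hx : StableBip firm worker b qF qW x)
    (hy : StableBip firm worker b qF qW y) : x = y := by
  by_contra hne
  obtain ⟨e, he, hmin⟩ := Finset.exists_min_image (Finset.univ.filter fun e => x e ≠ y e)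
    (fun e => max (x e) (y e)) (by simpa [Finset.filter_nonempty_iff, funext_iff] using hne)
  obtain ⟨e', hne', hlt⟩ := hx.exists_max_lt_of_ne hy (Finset.mem_filter.mp he).2
  exact (hmin e' (Finset.mem_filter.mpr ⟨Finset.mem_univ _, hne'⟩)).not_gt hlt

end Uniqueness

theorem stable_existsUnique_bipartite_general {E F W : Type*} [Fintype E]
    (firm : E → F) (worker : E → W) (b : E → ℝ≥0) (qF : F → ℝ≥0) (qW : W → ℝ≥0) :
    ∃! x : E → ℝ≥0, StableBip firm worker b qF qW x :=
  ⟨levelAssignment firm worker b qF qW, levelAssignment_stable firm worker b qF qW,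
    fun _ hy => hy.eq (levelAssignment_stable firm worker b qF qW)⟩

/-- In the diversifying bipartite market `(G, b, q)` there exists
exactly one stable assignment. -/
theorem stable_existsUnique_bipartite {E F W : Type*} [Fintype E] [Fintype F] [Fintype W]
    (firm : E → F) (worker : E → W) (b : E → ℝ≥0) (qF : F → ℝ≥0) (qW : W → ℝ≥0) :
    ∃! x : E → ℝ≥0, StableBip firm worker b qF qW x :=
  stable_existsUnique_bipartite_general firm worker b qF qW
end

section
/- In the diversifying bipartite market (G, b, q) the set of stable assignments is nonempty: there exists at least one stable assignment. -/
open scoped NNReal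

attribute [local instance] Classical.propDecidable

/-!
Firms are offered `p ≤ b`; each firm keeps its diversifying choice of `p` and rejects the rest,
so the workers are offered `b` minus the firms' rejections, and reject in turn. Raising a vector
lowers the cutting height, so rejection is monotone and `p ↦ b - R_W (b - R_F p)` is monotone;
it has a fixed point by Tarski's argument. At a fixed point, what the firms keep of `p` is what
the workers keep of their offers. An edge outside its firm's head was not cut by the firm, so its
worker was offered all of `b e`: either the edge is saturated or the worker cut it, which puts it
in the worker's head.
-/

open Finset

section DiversifyingChoice

variable {ι : Type*} (S : Finset ι) (qv : ℝ≥0)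

lemma headOn_congr {x x' : ι → ℝ≥0} (h : ∀ e ∈ S, x e = x' e) :
    headOn S qv x = headOn S qv x' := by
  ext e
  simp only [headOn, Set.mem_ofPred_eq, sum_congr rfl h, sup_congr rfl h]
  exact and_congr_right fun he => by rw [h e he]

lemma exists_sum_min_eq {z : ι → ℝ≥0} (h : qv ≤ ∑ e ∈ S, z e) :
    ∃ r : ℝ≥0, ∑ e ∈ S, min r (z e) = qv := by
  have hcont : Continuous fun r : ℝ≥0 => ∑ e ∈ S, min r (z e) := by fun_prop
  have hsup : ∑ e ∈ S, min (S.sup z) (z e) = ∑ e ∈ S, z e :=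
    sum_congr rfl fun e he => min_eq_right (le_sup he)
  obtain ⟨r, -, hr⟩ :=
    intermediate_value_Icc zero_le hcont.continuousOn ⟨by simp, hsup ▸ h⟩
  exact ⟨r, hr⟩

noncomputable def cutHeight (z : ι → ℝ≥0) : ℝ≥0 :=
  if h : qv ≤ ∑ e ∈ S, z e then (exists_sum_min_eq S qv h).choose else 0

lemma sum_min_cutHeight {z : ι → ℝ≥0} (h : qv ≤ ∑ e ∈ S, z e) :
    ∑ e ∈ S, min (cutHeight S qv z) (z e) = qv := by
  rw [cutHeight, dif_pos h]
  exact (exists_sum_min_eq S qv h).choose_spec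

lemma cutHeight_anti {z z' : ι → ℝ≥0} (hz : ∀ e ∈ S, z e ≤ z' e)
    (h : qv < ∑ e ∈ S, z e) :
    cutHeight S qv z' ≤ cutHeight S qv z := by
  have h' : qv < ∑ e ∈ S, z' e := h.trans_le (sum_le_sum hz)
  set r := cutHeight S qv z
  set r' := cutHeight S qv z'
  by_contra! hlt
  obtain ⟨e, he, hre⟩ : ∃ e ∈ S, r < z' e := by
    by_contra! hall
    have hsum : ∑ e ∈ S, min r' (z' e) = ∑ e ∈ S, z' e :=
      sum_congr rfl fun e he => min_eq_right ((hall e he).trans hlt.le)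
    rw [sum_min_cutHeight S qv h'.le] at hsum
    exact h'.ne hsum
  refine lt_irrefl qv ?_
  calc qv = ∑ e ∈ S, min r (z e) := (sum_min_cutHeight S qv h.le).symm
    _ ≤ ∑ e ∈ S, min r (z' e) := sum_le_sum fun e he => min_le_min_left _ (hz e he)
    _ < ∑ e ∈ S, min r' (z' e) :=
      sum_lt_sum (fun e _ => min_le_min_right _ hlt.le)
        ⟨e, he, by rw [min_eq_left hre.le]; exact lt_min hlt hre⟩
    _ = qv := sum_min_cutHeight S qv h'.le

noncomputable def divChoice (z : ι → ℝ≥0) : ι → ℝ≥0 :=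
  if qv < ∑ e ∈ S, z e then fun e => min (cutHeight S qv z) (z e) else z

lemma divChoice_le (z : ι → ℝ≥0) : divChoice S qv z ≤ z := by
  unfold divChoice
  split_ifs
  · exact fun e => min_le_right _ _
  · exact le_rfl

lemma sum_divChoice_le (z : ι → ℝ≥0) : ∑ e ∈ S, divChoice S qv z e ≤ qv := by
  unfold divChoice
  split_ifs with h
  · exact (sum_min_cutHeight S qv h.le).le
  · exact not_lt.1 h

lemma monotone_sub_divChoice : Monotone fun z => z - divChoice S qv z := by
  intro z z' hz e
  simp only [Pi.sub_apply]
  by_cases h : qv < ∑ e ∈ S, z e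
  · have h' : qv < ∑ e ∈ S, z' e := h.trans_le (sum_le_sum fun e _ => hz e)
    simp only [divChoice, if_pos h, if_pos h', min_comm _ (z _), min_comm _ (z' _), tsub_min]
    exact tsub_le_tsub (hz e) (cutHeight_anti S qv (fun e _ => hz e) h)
  · simp [divChoice, h]

lemma mem_headOn_divChoice_of_lt {z : ι → ℝ≥0} {e : ι} (he : e ∈ S)
    (hlt : divChoice S qv z e < z e) : e ∈ headOn S qv (divChoice S qv z) := by
  unfold divChoice at hlt ⊢
  split_ifs at hlt ⊢ with h
  · set r := cutHeight S qv z
    have hcut : min r (z e) = r :=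
      min_eq_left (min_lt_iff.1 hlt |>.resolve_right (lt_irrefl _)).le
    refine ⟨he, sum_min_cutHeight S qv h.le, le_antisymm (le_sup (f := fun e' => min r (z e')) he)
      (Finset.sup_le fun e' _ => ?_)⟩
    simp only [hcut, min_le_left]
  · exact absurd hlt (lt_irrefl _)

end DiversifyingChoice

section Fibers

variable {E V : Type*} [Fintype E] (π : E → V) (q : V → ℝ≥0)

/-- With `π = firm`, every firm `i` applies its choice function `C_i` to its own edges. -/
noncomputable def fiberChoice (z : E → ℝ≥0) : E → ℝ≥0 :=
  fun e => divChoice (univ.filter fun e' => π e' = π e) (q (π e)) z e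

lemma fiberChoice_eq_divChoice {z : E → ℝ≥0} {v : V} {e : E}
    (he : e ∈ univ.filter fun e' => π e' = v) :
    fiberChoice π q z e = divChoice (univ.filter fun e' => π e' = v) (q v) z e := by
  obtain ⟨-, rfl⟩ := mem_filter.1 he
  rfl

lemma fiberChoice_le (z : E → ℝ≥0) : fiberChoice π q z ≤ z :=
  fun e => divChoice_le _ _ z e

lemma sum_fiberChoice_le (z : E → ℝ≥0) (v : V) :
    ∑ e ∈ univ.filter (fun e => π e = v), fiberChoice π q z e ≤ q v := by
  rw [sum_congr rfl fun e he => fiberChoice_eq_divChoice π q he]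
  exact sum_divChoice_le _ _ z

lemma monotone_sub_fiberChoice : Monotone fun z => z - fiberChoice π q z :=
  fun _ _ h e => monotone_sub_divChoice _ _ h e

lemma mem_headOn_fiberChoice_of_lt {z : E → ℝ≥0} {e : E} (h : fiberChoice π q z e < z e) :
    e ∈ headOn (univ.filter fun e' => π e' = π e) (q (π e)) (fiberChoice π q z) := by
  rw [headOn_congr _ _ fun e' he' => fiberChoice_eq_divChoice π q he']
  exact mem_headOn_divChoice_of_lt _ _ (by simp) h

end Fibers

lemma exists_fixedPoint_of_monotone {α : Type*} [ConditionallyCompleteLattice α] {f : α → α}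
    (hf : Monotone f) {a b : α} (ha : a ≤ f a) (hb : ∀ x, f x ≤ b) : ∃ p, f p = p := by
  set P := {x | x ≤ f x}
  have hP : BddAbove P := ⟨b, fun x hx => hx.trans (hb x)⟩
  have hle : sSup P ≤ f (sSup P) :=
    csSup_le ⟨a, ha⟩ fun x hx => hx.trans (hf (le_csSup hP hx))
  exact ⟨sSup P, le_antisymm (le_csSup hP (hf hle)) hle⟩

lemma stableBip_of_fiberChoice_eq {E F W : Type*} [Fintype E]
    {firm : E → F} {worker : E → W} {b : E → ℝ≥0} {qF : F → ℝ≥0} {qW : W → ℝ≥0}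
    {p y x : E → ℝ≥0}
    (hF : fiberChoice firm qF p = x) (hW : fiberChoice worker qW y = x)
    (hy : y = b - (p - x)) :
    StableBip firm worker b qF qW x := by
  have hxp : x ≤ p := hF ▸ fiberChoice_le firm qF p
  have hxy : x ≤ y := hW ▸ fiberChoice_le worker qW y
  have hyb : y ≤ b := hy ▸ fun e => tsub_le_self
  refine ⟨fun e => (hxy.trans hyb) e, fun i => Or.inl ⟨?_, fun _ _ => rfl⟩,
    fun j => Or.inl ⟨?_, fun _ _ => rfl⟩, fun e => ?_⟩
  · exact hF ▸ sum_fiberChoice_le firm qF p i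
  · exact hW ▸ sum_fiberChoice_le worker qW y j
  rcases (hxp e).lt_or_eq with hlt | hxpe
  · left; left
    rw [← hF] at hlt ⊢
    exact mem_headOn_fiberChoice_of_lt firm qF hlt
  rcases (hxy e).lt_or_eq with hlt | hxye
  · right; left
    rw [← hW] at hlt ⊢
    exact mem_headOn_fiberChoice_of_lt worker qW hlt
  · right; right
    rw [hxye, hy, Pi.sub_apply, Pi.sub_apply, hxpe, tsub_self, tsub_zero]

theorem stable_exists_bipartite_general {E F W : Type*} [Fintype E]
    (firm : E → F) (worker : E → W) (b : E → ℝ≥0) (qF : F → ℝ≥0) (qW : W → ℝ≥0) :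
    ∃ x : E → ℝ≥0, StableBip firm worker b qF qW x := by
  set rejF := fun z => z - fiberChoice firm qF z
  set rejW := fun z => z - fiberChoice worker qW z
  have hmono : Monotone fun p => b - rejW (b - rejF p) := fun p p' h =>
    tsub_le_tsub_left (monotone_sub_fiberChoice worker qW
      (tsub_le_tsub_left (monotone_sub_fiberChoice firm qF h) b)) b
  obtain ⟨p, hp⟩ := exists_fixedPoint_of_monotone hmono zero_le fun _ => tsub_le_self
  set x := fiberChoice firm qF p
  set y := b - (p - x)
  refine ⟨x, stableBip_of_fiberChoice_eq rfl ?_ rfl⟩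
  funext e
  have hxp : x e ≤ p e := fiberChoice_le firm qF p e
  have hyW : fiberChoice worker qW y e ≤ y e := fiberChoice_le worker qW y e
  calc fiberChoice worker qW y e
    _ = y e - rejW y e := (tsub_tsub_cancel_of_le hyW).symm
    _ = (b e - rejW y e) - (p e - x e) := tsub_right_comm
    _ = p e - (p e - x e) := by rw [← congrFun hp e]; rfl
    _ = x e := tsub_tsub_cancel_of_le hxp

/-- In the diversifying bipartite market `(G, b, q)` the set of
stable assignments is nonempty. -/
theorem stable_exists_bipartite {E F W : Type*} [Fintype E] [Fintype F] [Fintype W]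
    (firm : E → F) (worker : E → W) (b : E → ℝ≥0) (qF : F → ℝ≥0) (qW : W → ℝ≥0) :
    ∃ x : E → ℝ≥0, StableBip firm worker b qF qW x :=
  stable_exists_bipartite_general firm worker b qF qW
end

section
/- Double-cover correspondence: the map sending an assignment x of G to the assignment x̃ of 𝒢 defined by x̃(u₁v₂) = x({u,v}) = x̃(v₁u₂) establishes a bijection between the stable assignments of (G, b, q) and the symmetric stable assignments of (𝒢, b̃, q̃). -/
open scoped NNReal

attribute [local instance] Classical.propDecidable

/-- The set of edges of the (finite, not necessarily bipartite) graph `G` incident to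
the vertex `v`. -/
noncomputable def incEdges {V : Type*} [Fintype V] [DecidableEq V] (G : SimpleGraph V)
    [DecidableRel G.Adj] (v : V) : Finset G.edgeSet :=
  Finset.univ.filter fun e => v ∈ (e : Sym2 V)

/-- A stable assignment of the diversifying market on an arbitrary finite graph `G`
with edge capacities `b` and vertex quotas `q`: an assignment `x` on the edges of `G`
is stable if it is admissible (`x ≤ b`), rational at every vertex (`C_v(x_v) = x_v`),
and has no blocking edge, i.e. every edge is satiated for at least one of its two
endpoints. -/
def StableGraph {V : Type*} [Fintype V] [DecidableEq V] (G : SimpleGraph V)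
    [DecidableRel G.Adj] (b : G.edgeSet → ℝ≥0) (q : V → ℝ≥0)
    (x : G.edgeSet → ℝ≥0) : Prop :=
  (∀ e, x e ≤ b e) ∧
  (∀ v : V, IsDivChoiceOn (incEdges G v) (q v) x x) ∧
  ∀ e : G.edgeSet, ∃ v ∈ (e : Sym2 V), satiatedOn (incEdges G v) (q v) b x e

/-!
The double cover's edges are the darts of `G`, and the darts leaving (or entering) a vertex `u`
correspond bijectively, via `d ↦ d.edge`, to the edges of `G` at `u`. Hence the data seen by `u₁`
(or `u₂`) in `𝒢` under `x ∘ edge` — sums, maxima, cutting heights, satiated edges — are exactly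
those seen by `u` in `G` under `x`, so stability transfers in both directions. Symmetric
assignments of `𝒢` are precisely those constant on the fibres of `d ↦ d.edge`, i.e. of the form
`x ∘ edge`, which gives surjectivity.
-/

open SimpleGraph

section Image

variable {E E' : Type*} [DecidableEq E'] {S : Finset E} {φ : E → E'}

theorem isDivChoiceOn_image (hφ : Set.InjOn φ S) (qv : ℝ≥0) (z w : E' → ℝ≥0) :
    IsDivChoiceOn (S.image φ) qv z w ↔ IsDivChoiceOn S qv (z ∘ φ) (w ∘ φ) := by
  simp only [IsDivChoiceOn, Finset.sum_image hφ, Finset.forall_mem_image, Function.comp_apply]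

theorem mem_headOn_image (hφ : Set.InjOn φ S) (qv : ℝ≥0) (x : E' → ℝ≥0) {d : E} (hd : d ∈ S) :
    φ d ∈ headOn (S.image φ) qv x ↔ d ∈ headOn S qv (x ∘ φ) := by
  simp only [headOn, Set.mem_ofPred_eq, Finset.sum_image hφ, Finset.sup_image,
    Finset.mem_image_of_mem φ hd, hd, Function.comp_apply]

theorem satiatedOn_image (hφ : Set.InjOn φ S) (qv : ℝ≥0) (b x : E' → ℝ≥0) {d : E}
    (hd : d ∈ S) :
    satiatedOn (S.image φ) qv b x (φ d) ↔ satiatedOn S qv (b ∘ φ) (x ∘ φ) d := by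
  rw [satiatedOn, satiatedOn, mem_headOn_image hφ qv x hd, Function.comp_apply,
    Function.comp_apply]

end Image

namespace SimpleGraph

variable {V : Type*} (G : SimpleGraph V)

def dartEdge (d : G.Dart) : G.edgeSet := ⟨d.edge, d.edge_mem⟩

theorem coe_dartEdge (d : G.Dart) : (G.dartEdge d : Sym2 V) = d.edge :=
  rfl

theorem dartEdge_surjective : Function.Surjective G.dartEdge := by
  rintro ⟨e, he⟩
  induction e using Sym2.ind with
  | h u v => exact ⟨⟨(u, v), he⟩, rfl⟩

theorem dartEdge_symm (d : G.Dart) : G.dartEdge d.symm = G.dartEdge d :=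
  Subtype.ext d.edge_symm

theorem dartEdge_eq_dartEdge_iff (d₁ d₂ : G.Dart) :
    G.dartEdge d₁ = G.dartEdge d₂ ↔ d₁ = d₂ ∨ d₁ = d₂.symm :=
  Subtype.ext_iff.trans (dart_edge_eq_iff d₁ d₂)

theorem factorsThrough_dartEdge {α : Type*} {y : G.Dart → α} (hy : ∀ d, y d.symm = y d) :
    y.FactorsThrough G.dartEdge := by
  intro d₁ d₂ h
  rcases (G.dartEdge_eq_dartEdge_iff d₁ d₂).mp h with rfl | rfl
  · rfl
  · exact hy d₂

theorem dartEdge_injOn_fst (u : V) : Set.InjOn G.dartEdge {d | d.fst = u} := by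
  rintro d₁ rfl d₂ h₂ h
  rcases (G.dartEdge_eq_dartEdge_iff d₁ d₂).mp h with rfl | rfl
  · rfl
  · exact absurd h₂ d₂.fst_ne_snd

variable [Fintype V] [DecidableEq V] [DecidableRel G.Adj]

theorem image_firmEdges_fst (u : V) :
    (firmEdges (fun d : G.Dart => d.fst) u).image G.dartEdge = incEdges G u := by
  ext ⟨e, he⟩
  induction e using Sym2.ind with
  | h v w =>
    simp only [Finset.mem_image, firmEdges, incEdges, Finset.mem_filter, Finset.mem_univ,
      true_and, Sym2.mem_iff]
    constructor
    · rintro ⟨d, rfl, hd⟩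
      rcases (dart_edge_eq_iff d ⟨(v, w), he⟩).mp (congrArg Subtype.val hd) with rfl | rfl
      exacts [Or.inl rfl, Or.inr rfl]
    · rintro (rfl | rfl)
      · exact ⟨⟨(u, w), he⟩, rfl, rfl⟩
      · exact ⟨(⟨(v, u), he⟩ : G.Dart).symm, rfl, G.dartEdge_symm _⟩

theorem workerEdges_snd (u : V) :
    workerEdges (fun d : G.Dart => d.snd) u =
      (firmEdges (fun d : G.Dart => d.fst) u).image Dart.symm := by
  ext d
  simp only [workerEdges, firmEdges, Finset.mem_image, Finset.mem_filter, Finset.mem_univ,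
    true_and]
  exact ⟨fun h => ⟨d.symm, h, d.symm_symm⟩, by rintro ⟨d', rfl, rfl⟩; rfl⟩

theorem dartEdge_injOn_firmEdges (u : V) :
    Set.InjOn G.dartEdge (firmEdges (fun d : G.Dart => d.fst) u : Set G.Dart) := by
  simpa [firmEdges] using G.dartEdge_injOn_fst u

theorem dartEdge_injOn_workerEdges (u : V) :
    Set.InjOn G.dartEdge (workerEdges (fun d : G.Dart => d.snd) u : Set G.Dart) := by
  rw [workerEdges_snd, Finset.coe_image]
  rintro _ ⟨d₁, h₁, rfl⟩ _ ⟨d₂, h₂, rfl⟩ h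
  rw [dartEdge_symm, dartEdge_symm] at h
  rw [G.dartEdge_injOn_firmEdges u h₁ h₂ h]

theorem image_workerEdges_snd (u : V) :
    (workerEdges (fun d : G.Dart => d.snd) u).image G.dartEdge = incEdges G u := by
  rw [workerEdges_snd, Finset.image_image, ← image_firmEdges_fst]
  congr 1
  exact funext G.dartEdge_symm

variable {G}

theorem isDivChoiceOn_firmEdges_iff (u : V) (qv : ℝ≥0) (x : G.edgeSet → ℝ≥0) :
    IsDivChoiceOn (firmEdges (fun d : G.Dart => d.fst) u) qv (x ∘ G.dartEdge)
        (x ∘ G.dartEdge) ↔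
      IsDivChoiceOn (incEdges G u) qv x x := by
  rw [← image_firmEdges_fst, isDivChoiceOn_image (G.dartEdge_injOn_firmEdges u)]

theorem isDivChoiceOn_workerEdges_iff (u : V) (qv : ℝ≥0) (x : G.edgeSet → ℝ≥0) :
    IsDivChoiceOn (workerEdges (fun d : G.Dart => d.snd) u) qv (x ∘ G.dartEdge)
        (x ∘ G.dartEdge) ↔
      IsDivChoiceOn (incEdges G u) qv x x := by
  rw [← image_workerEdges_snd, isDivChoiceOn_image (G.dartEdge_injOn_workerEdges u)]

theorem satiatedOn_firmEdges_iff (d : G.Dart) (qv : ℝ≥0) (b x : G.edgeSet → ℝ≥0) :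
    satiatedOn (firmEdges (fun d : G.Dart => d.fst) d.fst) qv (b ∘ G.dartEdge)
        (x ∘ G.dartEdge) d ↔
      satiatedOn (incEdges G d.fst) qv b x (G.dartEdge d) := by
  rw [← image_firmEdges_fst, satiatedOn_image (G.dartEdge_injOn_firmEdges _)]
  simp [firmEdges]

theorem satiatedOn_workerEdges_iff (d : G.Dart) (qv : ℝ≥0) (b x : G.edgeSet → ℝ≥0) :
    satiatedOn (workerEdges (fun d : G.Dart => d.snd) d.snd) qv (b ∘ G.dartEdge)
        (x ∘ G.dartEdge) d ↔
      satiatedOn (incEdges G d.snd) qv b x (G.dartEdge d) := by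
  rw [← image_workerEdges_snd, satiatedOn_image (G.dartEdge_injOn_workerEdges _)]
  simp [workerEdges]

theorem stableGraph_iff_stableBip (b : G.edgeSet → ℝ≥0) (q : V → ℝ≥0) (x : G.edgeSet → ℝ≥0) :
    StableGraph G b q x ↔
      StableBip (fun d : G.Dart => d.fst) (fun d : G.Dart => d.snd) (b ∘ G.dartEdge) q q
        (x ∘ G.dartEdge) := by
  simp only [StableGraph, StableBip, isDivChoiceOn_firmEdges_iff, isDivChoiceOn_workerEdges_iff,
    satiatedOn_firmEdges_iff, satiatedOn_workerEdges_iff, and_self_left,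
    G.dartEdge_surjective.forall, coe_dartEdge, Dart.edge, Sym2.mem_iff, or_and_right, exists_or,
    exists_eq_left, Function.comp_apply]

end SimpleGraph

/-- The edges of the double cover `𝒢` are the darts of `G`: the dart `(u, v)` is the edge `u₁v₂`,
with firm-side endpoint `u` and worker-side endpoint `v`, and `σ` is `Dart.symm`. -/
theorem doubleCover_stable_bijOn {V : Type*} [Fintype V] [DecidableEq V]
    (G : SimpleGraph V) [DecidableRel G.Adj] (b : G.edgeSet → ℝ≥0) (q : V → ℝ≥0) :
    Set.BijOn (fun (x : G.edgeSet → ℝ≥0) => fun d : G.Dart => x ⟨d.edge, d.edge_mem⟩)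
      {x | StableGraph G b q x}
      {y | StableBip (fun d : G.Dart => d.fst) (fun d : G.Dart => d.snd)
            (fun d : G.Dart => b ⟨d.edge, d.edge_mem⟩) q q y ∧
           ∀ d : G.Dart, y d.symm = y d} := by
  refine ⟨fun x hx => ⟨(stableGraph_iff_stableBip b q x).mp hx, fun d => congrArg x
    (G.dartEdge_symm d)⟩, G.dartEdge_surjective.injective_comp_right.injOn, ?_⟩
  rintro y ⟨hy, hsym⟩
  obtain ⟨x, rfl⟩ := (Function.factorsThrough_iff y).mp (G.factorsThrough_dartEdge hsym)
  exact ⟨x, (stableGraph_iff_stableBip b q x).mpr hy, rfl⟩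
end

section
/- Hypergraph key property: assume E is nonempty and every vertex of the hypergraph H = (V, E) is incident to at least one hyperedge. For each v ∈ V let z_v = C_v(b|_{E_v}) and m_v = min_{e∈E_v} z_v(e); let m = min_{v∈V} m_v, and let e₀ be a hyperedge and v₀ ∈ e₀ a vertex with z_{v₀}(e₀) = m_{v₀} = m. Then every stable assignment x of (H, b, q) satisfies x(e₀) = m. -/
open scoped NNReal

attribute [local instance] Classical.propDecidable

/-- The set `E_v` of hyperedges of the hypergraph (given by the incidence map
`inc : E → Finset V`, each hyperedge being a subset of `V`) containing vertex `v`. -/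
noncomputable def vertEdges {V E : Type*} [Fintype E] (inc : E → Finset V) (v : V) :
    Finset E :=
  Finset.univ.filter fun e => v ∈ inc e

/-- A stable assignment of the diversifying market on a finite hypergraph `H = (V, E)`
(with hyperedge `e` having vertex set `inc e`), capacities `b` and quotas `q`: an
assignment `x : E → ℝ≥0` is stable if it is admissible (`x ≤ b`), rational at every
vertex (`C_v(x_v) = x_v`), and has no blocking hyperedge, i.e. every hyperedge is
satiated for at least one of its vertices. -/
def StableHyp {V E : Type*} [Fintype E] (inc : E → Finset V) (b : E → ℝ≥0)
    (q : V → ℝ≥0) (x : E → ℝ≥0) : Prop :=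
  (∀ e, x e ≤ b e) ∧
  (∀ v : V, IsDivChoiceOn (vertEdges inc v) (q v) x x) ∧
  ∀ e : E, ∃ v ∈ inc e, satiatedOn (vertEdges inc v) (q v) b x e

/-!
Every stable `x` gives each edge at least `m`: an edge `e` with `x e < m ≤ z_v e ≤ b e` is
below capacity, so it must lie in the head of some vertex `v`; but then all of `x_v` is below
`m`, hence `∑ x_v < ∑ z_v ≤ q v`, contradicting that the head is full. Conversely
`x e₀ ≤ z_{v₀} e₀ = m`: otherwise `z_{v₀}` is cut at height `m`, so `z_{v₀} ≤ m ≤ x_{v₀}`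
with strict inequality at `e₀`, and `∑ x_{v₀}` would exceed the quota.
-/

theorem mem_vertEdges {V E : Type*} [Fintype E] {inc : E → Finset V} {v : V} {e : E} :
    e ∈ vertEdges inc v ↔ v ∈ inc e := by
  simp [vertEdges]

namespace IsDivChoiceOn

variable {E : Type*} {S : Finset E} {qv : ℝ≥0} {z w : E → ℝ≥0}

theorem sum_le (hw : IsDivChoiceOn S qv z w) : ∑ e ∈ S, w e ≤ qv := by
  rcases hw with ⟨hle, hwz⟩ | ⟨-, r, hr, hwr⟩
  · rwa [Finset.sum_congr rfl hwz]
  · rw [Finset.sum_congr rfl hwr, hr]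

theorem le (hw : IsDivChoiceOn S qv z w) {e : E} (he : e ∈ S) : w e ≤ z e := by
  rcases hw with ⟨-, hwz⟩ | ⟨-, r, -, hwr⟩
  · exact (hwz e he).le
  · exact (hwr e he).trans_le (min_le_right _ _)

theorem apply_le_of_sum_le (hw : IsDivChoiceOn S qv z w) {y : E → ℝ≥0} {e : E} (he : e ∈ S)
    (hyz : ∀ e' ∈ S, y e' ≤ z e') (hy : ∑ e' ∈ S, y e' ≤ qv) (hwy : ∀ e' ∈ S, w e ≤ y e') :
    y e ≤ w e := by
  rcases hw with ⟨-, hwz⟩ | ⟨-, r, hr, hwr⟩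
  · exact (hwz e he).symm ▸ hyz e he
  rcases le_total (z e) r with hzr | hrz
  · rw [hwr e he, min_eq_right hzr]
    exact hyz e he
  have hwe : w e = r := by rw [hwr e he, min_eq_left hrz]
  by_contra! hlt
  have hwy' : ∀ e' ∈ S, w e' ≤ y e' := fun e' he' =>
    calc w e' = min r (z e') := hwr e' he'
      _ ≤ r := min_le_left _ _
      _ = w e := hwe.symm
      _ ≤ y e' := hwy e' he'
  have : qv < qv :=
    calc qv = ∑ e' ∈ S, w e' := by rw [Finset.sum_congr rfl hwr, hr]
      _ < ∑ e' ∈ S, y e' := Finset.sum_lt_sum hwy' ⟨e, he, hlt⟩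
      _ ≤ qv := hy
  exact this.false

end IsDivChoiceOn

theorem notMem_headOn_of_sum_le {E : Type*} {S : Finset E} {qv : ℝ≥0} {w x : E → ℝ≥0} {e : E}
    (hw : ∑ e' ∈ S, w e' ≤ qv) (hlt : ∀ e' ∈ S, x e < w e') : e ∉ headOn S qv x := by
  rintro ⟨he, hsum, hmax⟩
  have : qv < qv :=
    calc qv = ∑ e' ∈ S, x e' := hsum.symm
      _ < ∑ e' ∈ S, w e' := Finset.sum_lt_sum_of_nonempty ⟨e, he⟩ fun e' he' =>
          (hmax ▸ Finset.le_sup he' : x e' ≤ x e).trans_lt (hlt e' he')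
      _ ≤ qv := hw
  exact this.false

theorem StableHyp.le_apply {V E : Type*} [Fintype E] {inc : E → Finset V} {b : E → ℝ≥0}
    {q : V → ℝ≥0} {x : E → ℝ≥0} (hx : StableHyp inc b q x) {zc : V → E → ℝ≥0}
    (hzc : ∀ v, IsDivChoiceOn (vertEdges inc v) (q v) b (zc v)) {μ : ℝ≥0}
    (hμ : ∀ v, ∀ e ∈ vertEdges inc v, μ ≤ zc v e) (e : E) : μ ≤ x e := by
  by_contra! hlt
  obtain ⟨v, hv, hhead | hcap⟩ := hx.2.2 e
  · exact notMem_headOn_of_sum_le (hzc v).sum_le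
      (fun e' he' => hlt.trans_le (hμ v e' he')) hhead
  · have he : e ∈ vertEdges inc v := mem_vertEdges.2 hv
    exact ((hcap ▸ hlt : b e < μ).trans_le ((hμ v e he).trans ((hzc v).le he))).false

theorem hypergraph_key_property_general {V E : Type*} [Fintype E]
    (inc : E → Finset V) (b : E → ℝ≥0) (q : V → ℝ≥0)
    (zc : V → E → ℝ≥0) (hzc : ∀ v : V, IsDivChoiceOn (vertEdges inc v) (q v) b (zc v))
    (mv : V → ℝ≥0) (hmv : ∀ v : V, mv v = sInf (zc v '' (vertEdges inc v : Set E)))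
    (m : ℝ≥0) (hm : m = sInf (Set.range mv))
    (e₀ : E) (v₀ : V) (hv₀ : v₀ ∈ inc e₀) (he₀ : zc v₀ e₀ = mv v₀) (hm₀ : mv v₀ = m) :
    ∀ x : E → ℝ≥0, StableHyp inc b q x → x e₀ = m := by
  intro x hx
  have hm_le : ∀ v, ∀ e ∈ vertEdges inc v, m ≤ zc v e := fun v e he =>
    calc m ≤ mv v := hm ▸ csInf_le' ⟨v, rfl⟩
      _ ≤ zc v e := hmv v ▸ csInf_le' ⟨e, he, rfl⟩
  have hlow : ∀ e, m ≤ x e := hx.le_apply hzc hm_le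
  have hz₀ : zc v₀ e₀ = m := he₀.trans hm₀
  refine le_antisymm ?_ (hlow e₀)
  rw [← hz₀]
  exact (hzc v₀).apply_le_of_sum_le (mem_vertEdges.2 hv₀) (fun e _ => hx.1 e)
    (hx.2.1 v₀).sum_le fun e _ => hz₀ ▸ hlow e

/-- Hypergraph key property: assume `E` is nonempty, every hyperedge
is nonempty, and every vertex is incident to at least one hyperedge. For each `v ∈ V`
let `z_v = C_v(b|_{E_v})` and `m_v = min_{e ∈ E_v} z_v(e)`; let `m = min_{v ∈ V} m_v`,
and let `e₀` be a hyperedge and `v₀ ∈ e₀` a vertex with `z_{v₀}(e₀) = m_{v₀} = m`.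
Then every stable assignment `x` of `(H, b, q)` satisfies `x(e₀) = m`. -/
theorem hypergraph_key_property {V E : Type*} [Fintype V] [Fintype E]
    (inc : E → Finset V) (b : E → ℝ≥0) (q : V → ℝ≥0)
    (hE : Nonempty E) (hedge : ∀ e, (inc e).Nonempty) (hvert : ∀ v : V, ∃ e : E, v ∈ inc e)
    (zc : V → E → ℝ≥0) (hzc : ∀ v : V, IsDivChoiceOn (vertEdges inc v) (q v) b (zc v))
    (mv : V → ℝ≥0) (hmv : ∀ v : V, mv v = sInf (zc v '' (vertEdges inc v : Set E)))
    (m : ℝ≥0) (hm : m = sInf (Set.range mv))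
    (e₀ : E) (v₀ : V) (hv₀ : v₀ ∈ inc e₀) (he₀ : zc v₀ e₀ = mv v₀) (hm₀ : mv v₀ = m) :
    ∀ x : E → ℝ≥0, StableHyp inc b q x → x e₀ = m :=
  hypergraph_key_property_general inc b q zc hzc mv hmv m hm e₀ v₀ hv₀ he₀ hm₀
end

section
/- For any finite hypergraph H = (V, E) with capacities b : E → ℝ≥0, quotas q : V → ℝ≥0, and diversifying choice functions at all vertices, there exists exactly one stable assignment. -/
open scoped NNReal

attribute [local instance] Classical.propDecidable

/-!
Existence is by water-filling: raise a common cutting height `r` on all capacities until some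
vertex `v` reaches its quota, freeze the edges of `v` at `min (b e) r`, and continue from height
`r` with the other vertices. Every edge then either attains its capacity or was frozen at the
top of a vertex that exhausted its quota.

For uniqueness, let `e` minimise `max (x e) (y e)` among the edges where two stable assignments
differ, say `y e < x e`. Then `e` is below capacity for `y`, hence in the head of `y` at some
vertex `v`. Since `y` exhausts the quota of `v` and `x` does not exceed it, some edge `e'` at `v`
has `x e' < y e' ≤ y e`, contradicting the choice of `e`.
-/

lemma IsDivChoiceOn.sum_le_s19 {E : Type*} {S : Finset E} {qv : ℝ≥0} {z w : E → ℝ≥0}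
    (h : IsDivChoiceOn S qv z w) : ∑ e ∈ S, w e ≤ qv := by
  rcases h with ⟨hsum, hw⟩ | ⟨-, r, hr, hw⟩
  · rwa [Finset.sum_congr rfl hw]
  · rw [Finset.sum_congr rfl hw, hr]

section WaterFilling

variable {V E : Type*} (S : V → Finset E) (q : V → ℝ≥0)

lemma exists_tight_cut_height {A : Finset V} {c : E → ℝ≥0} {r₀ : ℝ≥0}
    (h₀ : ∀ v ∈ A, ∑ e ∈ S v, min r₀ (c e) ≤ q v) {w : V} (hwA : w ∈ A)
    (hw : q w < ∑ e ∈ S w, c e) :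
    ∃ r, r₀ ≤ r ∧ (∀ v ∈ A, ∑ e ∈ S v, min r (c e) ≤ q v) ∧
      ∃ v ∈ A, ∑ e ∈ S v, min r (c e) = q v := by
  -- `F r ≤ 0` says that every vertex of `A` is within quota at height `r`, and
  -- `F r = 0` that moreover one of them is exactly at its quota.
  set F : ℝ≥0 → ℝ := fun r ↦ A.sup' ⟨w, hwA⟩ fun v ↦ (∑ e ∈ S v, min r (c e) : ℝ≥0) - (q v : ℝ)
  have hF : Continuous F := Continuous.finset_sup'_apply _ fun v _ ↦ by fun_prop
  set M := r₀ ⊔ (S w).sup c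
  have hFr₀ : F r₀ ≤ 0 := Finset.sup'_le _ _ fun v hv ↦ sub_nonpos.2 (mod_cast h₀ v hv)
  have hFM : 0 ≤ F M := by
    refine le_trans ?_ (Finset.le_sup' _ hwA)
    have hsumM : ∑ e ∈ S w, min M (c e) = ∑ e ∈ S w, c e :=
      Finset.sum_congr rfl fun e he ↦ min_eq_right (le_sup_of_le_right (Finset.le_sup he))
    simp only [hsumM, sub_nonneg]
    exact_mod_cast hw.le
  obtain ⟨r, ⟨hr₀, -⟩, hr⟩ :=
    intermediate_value_Icc le_sup_left hF.continuousOn ⟨hFr₀, hFM⟩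
  refine ⟨r, hr₀, fun v hv ↦ ?_, ?_⟩
  · exact_mod_cast sub_nonpos.1 ((Finset.sup'_le_iff _ _).1 hr.le v hv)
  · obtain ⟨v, hv, hFv⟩ := Finset.exists_mem_eq_sup' ⟨w, hwA⟩
      fun v ↦ (∑ e ∈ S v, min r (c e) : ℝ≥0) - (q v : ℝ)
    exact ⟨v, hv, by exact_mod_cast sub_eq_zero.1 (hFv.symm.trans hr)⟩

lemma exists_water_filling (A : Finset V) (c : E → ℝ≥0) (r₀ : ℝ≥0)
    (h₀ : ∀ v ∈ A, ∑ e ∈ S v, min r₀ (c e) ≤ q v) :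
    ∃ x : E → ℝ≥0, x ≤ c ∧ (∀ e, min r₀ (c e) ≤ x e) ∧ (∀ v ∈ A, ∑ e ∈ S v, x e ≤ q v) ∧
      ∀ e, x e = c e ∨ ∃ v ∈ A, e ∈ headOn (S v) (q v) x := by
  induction A using Finset.strongInduction generalizing c r₀ with
  | H A ih =>
  by_cases hfits : ∀ v ∈ A, ∑ e ∈ S v, c e ≤ q v
  · exact ⟨c, le_rfl, fun e ↦ min_le_right _ _, hfits, fun e ↦ Or.inl rfl⟩
  push Not at hfits
  obtain ⟨w, hwA, hw⟩ := hfits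
  obtain ⟨r, hr₀, hrA, v₁, hv₁A, hv₁⟩ := exists_tight_cut_height S q h₀ hwA hw
  -- Starting the remaining vertices from the floor `r` keeps the capped edges at `v₁` fixed.
  set c' : E → ℝ≥0 := fun e ↦ if e ∈ S v₁ then min (c e) r else c e
  have hc'c : c' ≤ c := fun e ↦ by
    by_cases he : e ∈ S v₁ <;> simp [c', he]
  have hc'r : ∀ e, min r (c' e) = min r (c e) := fun e ↦ by
    by_cases he : e ∈ S v₁ <;> simp [c', he, min_comm]
  obtain ⟨x, hxc', hx₀, hxA, hxhead⟩ := ih (A.erase v₁) (Finset.erase_ssubset hv₁A) c' r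
    fun v hv ↦ by simpa only [hc'r] using hrA v (Finset.mem_of_mem_erase hv)
  have hxv₁ : ∀ e ∈ S v₁, x e = min (c e) r := fun e he ↦
    le_antisymm (by simpa [c', he] using hxc' e) (by simpa [hc'r, min_comm] using hx₀ e)
  have hsumv₁ : ∑ e ∈ S v₁, x e = q v₁ := by
    rw [Finset.sum_congr rfl hxv₁, ← hv₁]
    simp only [min_comm]
  refine ⟨x, hxc'.trans hc'c, fun e ↦ ?_, fun v hv ↦ ?_, fun e ↦ ?_⟩
  · calc min r₀ (c e) ≤ min r (c e) := min_le_min_right _ hr₀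
      _ = min r (c' e) := (hc'r e).symm
      _ ≤ x e := hx₀ e
  · rcases eq_or_ne v v₁ with rfl | hvv₁
    · exact hsumv₁.le
    · exact hxA v (Finset.mem_erase.2 ⟨hvv₁, hv⟩)
  · rcases hxhead e with hxe | ⟨v, hv, hhead⟩
    · by_cases hcut : e ∈ S v₁ ∧ r < c e
      · refine Or.inr ⟨v₁, hv₁A, hcut.1, hsumv₁,
          le_antisymm (Finset.le_sup hcut.1) (Finset.sup_le fun e' he' ↦ ?_)⟩
        rw [hxv₁ e' he', hxv₁ e hcut.1, min_eq_right hcut.2.le]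
        exact min_le_right _ _
      · refine Or.inl (hxe.trans ?_)
        by_cases he : e ∈ S v₁
        · simpa [c', he] using not_lt.1 fun hlt ↦ hcut ⟨he, hlt⟩
        · simp [c', he]
    · exact Or.inr ⟨v, Finset.mem_of_mem_erase hv, hhead⟩

end WaterFilling

section Uniqueness

variable {V E : Type*} [Fintype E] {inc : E → Finset V} {b : E → ℝ≥0} {q : V → ℝ≥0}
  {x y : E → ℝ≥0}

lemma StableHyp.le_of_forall_ne_max_le (hx : StableHyp inc b q x) (hy : StableHyp inc b q y)
    {e : E} (hmin : ∀ e', x e' ≠ y e' → max (x e) (y e) ≤ max (x e') (y e')) : x e ≤ y e := by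
  by_contra! hlt
  obtain ⟨v, -, ⟨he, hsum, hsup⟩ | hcap⟩ := hy.2.2 e
  · obtain ⟨e', he', hlt'⟩ : ∃ e' ∈ vertEdges inc v, x e' < y e' := by
      by_contra! hge
      exact (Finset.sum_lt_sum hge ⟨e, he, hlt⟩).not_ge (hsum ▸ (hx.2.1 v).sum_le_s19)
    have hmax := hmin e' hlt'.ne
    rw [max_eq_right hlt'.le] at hmax
    exact hlt.not_ge ((le_max_left _ _).trans (hmax.trans (hsup ▸ Finset.le_sup he')))
  · exact (hx.1 e).not_gt (hcap ▸ hlt)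

lemma StableHyp.unique (hx : StableHyp inc b q x) (hy : StableHyp inc b q y) : x = y := by
  by_contra hne
  obtain ⟨e, he, hmin⟩ := Finset.exists_min_image (Finset.univ.filter fun e ↦ x e ≠ y e)
    (fun e ↦ max (x e) (y e)) (by simpa [Finset.filter_nonempty_iff] using Function.ne_iff.1 hne)
  simp only [Finset.mem_filter, Finset.mem_univ, true_and] at he hmin
  refine he (le_antisymm (hx.le_of_forall_ne_max_le hy hmin) (hy.le_of_forall_ne_max_le hx ?_))
  simpa only [max_comm, ne_comm] using hmin

end Uniqueness

/-- For any finite hypergraph `H = (V, E)` (each hyperedge being a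
nonempty subset of `V`) with capacities `b : E → ℝ≥0`, quotas `q : V → ℝ≥0`, and
diversifying choice functions at all vertices, there exists exactly one stable
assignment. -/
theorem stable_existsUnique_hypergraph {V E : Type*} [Fintype V] [Fintype E]
    (inc : E → Finset V) (hedge : ∀ e, (inc e).Nonempty)
    (b : E → ℝ≥0) (q : V → ℝ≥0) :
    ∃! x : E → ℝ≥0, StableHyp inc b q x := by
  obtain ⟨x, hxb, -, hxq, hxhead⟩ :=
    exists_water_filling (vertEdges inc) q Finset.univ b 0 fun v _ ↦ by simp
  have hx : StableHyp inc b q x := by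
    refine ⟨hxb, fun v ↦ Or.inl ⟨hxq v (Finset.mem_univ v), fun _ _ ↦ rfl⟩, fun e ↦ ?_⟩
    rcases hxhead e with hcap | ⟨v, -, hhead⟩
    · obtain ⟨v, hv⟩ := hedge e
      exact ⟨v, hv, Or.inr hcap⟩
    · exact ⟨v, by simpa [vertEdges] using hhead.1, Or.inl hhead⟩
  exact ⟨x, hx, fun y hy ↦ hy.unique hx⟩
end
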